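/- The real cubic polynomial X³ + X² + (33/4)·X + 1/4 has exactly one real root; this real root is negative, and the two non-real complex roots form a conjugate pair with negative real part. In particular, for a = 1 the fixed point p_a = (1/4, 1/16, −16) of the vector field F_a(x,y,z) = (y·z + a, x² − y, 1 − 4x) is a sink whose linearization has one negative real eigenvalue and a pair of complex-conjugate eigenvalues with negative real part. -/
import Mathlib

private lemma cubic_mono : StrictMono (fun x : ℝ => x ^ 3 + x ^ 2 + (33 / 4) * x + 1 / 4) := by
  intro a b hab
  simp only
  nlinarith [sq_nonneg (3 * (a + b) + 2), sq_nonneg (a - b), sq_nonneg (a + b),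
    mul_pos (sub_pos.2 hab) (sub_pos.2 hab)]

private lemma cubic_root : ∃ r : ℝ, -1 < r ∧ r < 0 ∧ r ^ 3 + r ^ 2 + (33 / 4) * r + 1 / 4 = 0 := by
  have hc : ContinuousOn (fun x : ℝ => x ^ 3 + x ^ 2 + (33 / 4) * x + 1 / 4) (Set.Icc (-1) 0) := by
    fun_prop
  have h := intermediate_value_Icc (by norm_num : (-1:ℝ) ≤ 0) hc
  have h0 : (0:ℝ) ∈ Set.Icc ((fun x : ℝ => x ^ 3 + x ^ 2 + (33 / 4) * x + 1 / 4) (-1))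
      ((fun x : ℝ => x ^ 3 + x ^ 2 + (33 / 4) * x + 1 / 4) 0) := by
    norm_num
  obtain ⟨r, hr, hr0⟩ := h h0
  refine ⟨r, ?_, ?_, hr0⟩
  · rcases lt_or_eq_of_le hr.1 with h | h
    · exact h
    · exfalso; rw [← h] at hr0; norm_num at hr0
  · rcases lt_or_eq_of_le hr.2 with h | h
    · exact h
    · exfalso; rw [h] at hr0; norm_num at hr0

/-- The cubic `X³ + X² + (33/4)X + 1/4` has exactly one real root, which is
negative, and its two non-real roots form a complex-conjugate pair with negative real part
(so for `a = 1` the fixed point `p_a` of the Sprott-E-type system is a sink). -/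
theorem sprott_cubic_sink :
    (∃! x : ℝ, x ^ 3 + x ^ 2 + (33 / 4) * x + 1 / 4 = 0) ∧
    (∀ x : ℝ, x ^ 3 + x ^ 2 + (33 / 4) * x + 1 / 4 = 0 → x < 0) ∧
    (∃ z : ℂ, z.im ≠ 0 ∧ z.re < 0 ∧
      ∀ w : ℂ, (w ^ 3 + w ^ 2 + (33 / 4) * w + 1 / 4 = 0 ∧ w.im ≠ 0) ↔
        (w = z ∨ w = (starRingEnd ℂ) z)) := by
  obtain ⟨r, hr1, hr0, hroot⟩ := cubic_root
  have huniq : ∀ x : ℝ, x ^ 3 + x ^ 2 + (33 / 4) * x + 1 / 4 = 0 → x = r := by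
    intro x hx
    exact cubic_mono.injective (show (fun x : ℝ => x ^ 3 + x ^ 2 + (33 / 4) * x + 1 / 4) x =
      (fun x : ℝ => x ^ 3 + x ^ 2 + (33 / 4) * x + 1 / 4) r from hx.trans hroot.symm)
  refine ⟨⟨r, hroot, huniq⟩, fun x hx => (huniq x hx) ▸ hr0, ?_⟩
  set D : ℝ := (r ^ 2 + r + 33 / 4) - ((1 + r) / 2) ^ 2 with hD
  have hDpos : 0 < D := by rw [hD]; nlinarith [sq_nonneg (3 * r + 1)]
  set v : ℝ := Real.sqrt D with hv
  have hvpos : 0 < v := Real.sqrt_pos.2 hDpos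
  have hv2R : v ^ 2 = (r ^ 2 + r + 33 / 4) - ((1 + r) / 2) ^ 2 := Real.sq_sqrt hDpos.le
  set z : ℂ := (↑(-(1 + r) / 2) : ℂ) + (v : ℂ) * Complex.I with hz
  have hzre : z.re = -(1 + r) / 2 := by rw [hz]; simp
  have hzim : z.im = v := by rw [hz]; simp
  have hconj : (starRingEnd ℂ) z = (↑(-(1 + r) / 2) : ℂ) - (v : ℂ) * Complex.I := by
    apply Complex.ext
    · simp [hzre]
    · simp [hzim]
  have hrcR : r * (r ^ 2 + r + 33 / 4) = -(1 / 4) := by nlinarith [hroot]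
  have hrc := congrArg (Complex.ofReal) hrcR
  push_cast at hrc
  have hv2c := congrArg (Complex.ofReal) hv2R
  push_cast at hv2c
  have hI : Complex.I ^ 2 = -1 := Complex.I_sq
  have key : ∀ w : ℂ, w ^ 3 + w ^ 2 + (33 / 4) * w + 1 / 4 =
      (w - r) * ((w - z) * (w - (starRingEnd ℂ) z)) := by
    intro w
    rw [hconj, hz]
    push_cast
    linear_combination (w - (r:ℂ)) * (v:ℂ) ^ 2 * hI - (w - (r:ℂ)) * hv2c + hrc
  refine ⟨z, by rw [hzim]; exact hvpos.ne', by rw [hzre]; linarith, fun w => ⟨?_, ?_⟩⟩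
  · rintro ⟨hw, him⟩
    rw [key w] at hw
    rcases mul_eq_zero.1 hw with h | h
    · exfalso
      have hw' : w = (r : ℂ) := sub_eq_zero.1 h
      exact him (by rw [hw']; simp)
    · rcases mul_eq_zero.1 h with h' | h'
      · exact Or.inl (sub_eq_zero.1 h')
      · exact Or.inr (sub_eq_zero.1 h')
  · rintro (rfl | rfl)
    · refine ⟨by rw [key]; ring, by rw [hzim]; exact hvpos.ne'⟩
    · refine ⟨by rw [key]; ring, ?_⟩
      rw [Complex.conj_im, hzim]
      simpa using hvpos.ne'
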